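/- arXiv:2010.01623 — 2 statements merged into one kernel-verified Lean document; each statement's English description precedes it below -/
import Mathlib

section
/- Let m ≥ 1 and n be natural numbers, and consider the subposet S of the product poset (Fin n → Fin (m+1)) (pointwise order) consisting of those tuples x such that for every index i with i+1 < n, if x(i+1) = 0 then x(i) = 0. Then there is a bijection between the set of maximal chains of S and the set of partitions of a set with m·n elements (say Fin (m·n)) into blocks each of which has exactly m elements. -/
/-!
Grade `S` by the sum of the coordinates. Then `S` is a graded poset of rank `m n` whose covering
steps raise a single coordinate by one, so a maximal chain is recorded by the word of length `m n`
naming the coordinate raised at each step, each coordinate being raised `m` times. Numbering the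
coordinates from the last one down, the condition defining `S`, imposed on every element of the
chain, says that the letters used so far always form an initial segment of `Fin n`: the word is a
restricted growth word. Restricted growth words are exactly the canonical labellings of set
partitions (blocks numbered in the order of their least elements), and the letter multiplicities
become the block sizes.
-/

open Finset

section GradedFlag

variable {α : Type*} [PartialOrder α]

lemma eq_of_le_of_grade_eq [GradeOrder ℕ α] {a b : α} (hab : a ≤ b)
    (h : grade ℕ a = grade ℕ b) : a = b :=
  hab.eq_of_not_lt fun hlt => (grade_strictMono hlt).ne h

def isMaxChainEquivFlag : {C : Set α // IsMaxChain (· ≤ ·) C} ≃ Flag α where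
  toFun C := Flag.ofIsMaxChain C.1 C.2
  invFun s := ⟨s, s.maxChain⟩
  left_inv _ := rfl
  right_inv _ := rfl

@[ext]
structure GradeSection (α : Type*) [Preorder α] [GradeOrder ℕ α] (N : ℕ) where
  toFun : Fin (N + 1) → α
  monotone : Monotone toFun
  grade_toFun : ∀ k, grade ℕ (toFun k) = k

lemma GradeSection.wcovBy [GradeOrder ℕ α] {N : ℕ} (f : GradeSection α N) (k : Fin N) :
    f.toFun k.castSucc ⩿ f.toFun k.succ := by
  refine ⟨f.monotone k.castSucc_le_succ, fun c h₁ h₂ => ?_⟩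
  have h₁ := grade_strictMono (𝕆 := ℕ) h₁
  have h₂ := grade_strictMono (𝕆 := ℕ) h₂
  simp only [f.grade_toFun, Fin.val_succ, Fin.val_castSucc] at h₁ h₂
  omega

variable [BoundedOrder α] [GradeMinOrder ℕ α]

lemma GradeSection.toFun_zero {N : ℕ} (f : GradeSection α N) : f.toFun 0 = ⊥ :=
  (eq_of_le_of_grade_eq bot_le (by rw [grade_bot, f.grade_toFun]; rfl)).symm

lemma GradeSection.toFun_last {N : ℕ} (hN : grade ℕ (⊤ : α) = N) (f : GradeSection α N) :
    f.toFun (Fin.last N) = ⊤ :=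
  eq_of_le_of_grade_eq le_top (by rw [hN, f.grade_toFun, Fin.val_last])

lemma Flag.exists_grade_eq (s : Flag α) {k : ℕ} (hk : k ≤ grade ℕ (⊤ : α)) :
    ∃ a : s, grade ℕ a = k := by
  induction k with
  | zero => exact ⟨⊥, grade_bot⟩
  | succ k ih =>
    obtain ⟨a, ha⟩ := ih (by omega)
    have : WellFoundedLT s := GradeOrder.wellFoundedLT ℕ
    have hlt : a < ⊤ := lt_top_iff_ne_top.2 fun h => by
      rw [h] at ha
      change grade ℕ (⊤ : α) = k at ha
      omega
    obtain ⟨b, hab, -⟩ := exists_covBy_le_of_lt hlt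
    exact ⟨b, by rw [← Nat.covBy_iff_add_one_eq.1 (hab.grade ℕ), ha]⟩

noncomputable def Flag.ofGrade (s : Flag α) {k : ℕ} (hk : k ≤ grade ℕ (⊤ : α)) : s :=
  (s.exists_grade_eq hk).choose

lemma Flag.grade_ofGrade (s : Flag α) {k : ℕ} (hk : k ≤ grade ℕ (⊤ : α)) :
    grade ℕ (s.ofGrade hk) = k :=
  (s.exists_grade_eq hk).choose_spec

lemma Flag.ofGrade_eq (s : Flag α) {k : ℕ} (hk : k ≤ grade ℕ (⊤ : α)) {a : s}
    (ha : grade ℕ a = k) : s.ofGrade hk = a := by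
  classical
  exact grade_injective (𝕆 := ℕ) ((s.grade_ofGrade hk).trans ha.symm)

noncomputable def Flag.toGradeSection (s : Flag α) {N : ℕ} (hN : grade ℕ (⊤ : α) = N) :
    GradeSection α N := by
  classical
  exact {
    toFun k := s.ofGrade (hN ▸ k.is_le)
    monotone j k hjk := Subtype.coe_le_coe.2 <|
      (grade_le_grade_iff (𝕆 := ℕ)).1 (by rw [s.grade_ofGrade, s.grade_ofGrade]; exact hjk)
    grade_toFun k := s.grade_ofGrade _ }

noncomputable def Flag.equivGradeSection {N : ℕ} (hN : grade ℕ (⊤ : α) = N) :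
    Flag α ≃ GradeSection α N where
  toFun s := s.toGradeSection hN
  invFun f := Flag.rangeFin f.toFun f.toFun_zero (f.toFun_last hN) f.wcovBy
  left_inv s := by
    ext a
    refine ⟨?_, fun ha => ?_⟩
    · rintro ⟨k, rfl⟩
      exact Subtype.coe_prop _
    · have hk : grade ℕ a < N + 1 := hN ▸ Nat.lt_succ_of_le (grade_mono le_top)
      exact ⟨⟨grade ℕ a, hk⟩,
        congrArg Subtype.val (s.ofGrade_eq _ (a := ⟨a, ha⟩) rfl)⟩
  right_inv f := by
    ext k
    exact congrArg Subtype.val ((Flag.rangeFin _ _ _ _).ofGrade_eq _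
      (a := ⟨f.toFun k, k, rfl⟩) (f.grade_toFun k))

end GradedFlag

def IsRestrictedGrowth {X ι : Type*} [LT X] [LT ι] (w : X → ι) : Prop :=
  ∀ t, ∀ j < w t, ∃ s < t, w s = j

lemma IsRestrictedGrowth.eq_of_forall_eq_iff {X ι : Type*} [LinearOrder X] [WellFoundedLT X]
    [LinearOrder ι] {w w' : X → ι} (hw : IsRestrictedGrowth w) (hw' : IsRestrictedGrowth w')
    (h : ∀ s t, w s = w t ↔ w' s = w' t) : w = w' := by
  -- If `w t < w' t` at a first difference `t`, then `w' s = w t` for some `s < t`; there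
  -- `w s = w' s = w t` but `w' s ≠ w' t`, against the equality of the kernels.
  funext t
  induction t using WellFoundedLT.induction with
  | _ t ih =>
    by_contra hne
    rcases lt_or_gt_of_ne hne with hlt | hlt
    · obtain ⟨s, hst, hs⟩ := hw' t _ hlt
      have := (h s t).1 ((ih s hst).trans hs)
      exact hlt.ne (hs.symm.trans this)
    · obtain ⟨s, hst, hs⟩ := hw t _ hlt
      have := (h s t).2 ((ih s hst).symm.trans hs)
      exact hlt.ne (hs.symm.trans this)

section PrefixCount

variable {ι : Type*} [DecidableEq ι] {N : ℕ}

lemma exists_eq_add_single_of_le_of_sum_eq [Fintype ι] {f g : ι → ℕ} (hfg : f ≤ g)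
    (hsum : ∑ i, g i = ∑ i, f i + 1) : ∃ i, g = f + Pi.single i 1 := by
  obtain ⟨i, hi⟩ : ∃ i, f i < g i := by
    by_contra! h
    have := sum_le_sum fun i (_ : i ∈ univ) => h i
    omega
  have hle : ∀ j ∈ univ, (f + Pi.single i 1 : ι → ℕ) j ≤ g j := by
    intro j _
    rcases eq_or_ne j i with rfl | hj
    · simpa using hi
    · simpa [hj] using hfg j
  have hsum' : ∑ j, (f + Pi.single i 1 : ι → ℕ) j = ∑ j, g j := by
    simp [sum_add_distrib, hsum]
  exact ⟨i, funext fun j => ((sum_eq_sum_iff_of_le hle).1 hsum' j (mem_univ j)).symm⟩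

def prefixCount (w : Fin N → ι) (k : Fin (N + 1)) (i : ι) : ℕ :=
  #{t | t.castSucc < k ∧ w t = i}

variable (w : Fin N → ι)

lemma prefixCount_zero : prefixCount w 0 = 0 := by
  ext i
  simp [prefixCount]

lemma prefixCount_succ (t : Fin N) :
    prefixCount w t.succ = prefixCount w t.castSucc + Pi.single (w t) 1 := by
  ext i
  simp only [prefixCount, Fin.castSucc_lt_succ_iff, Fin.castSucc_lt_castSucc_iff, Pi.add_apply,
    Pi.single_apply]
  by_cases h : w t = i
  · have : univ.filter (fun s => s ≤ t ∧ w s = i) =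
        insert t (univ.filter fun s => s < t ∧ w s = i) := by
      ext s
      simp only [mem_filter, mem_univ, true_and, mem_insert, le_iff_lt_or_eq]
      grind
    rw [this, card_insert_of_notMem (by simp)]
    simp [h]
  · rw [if_neg (Ne.symm h), add_zero]
    congr 1
    ext s
    simp only [mem_filter, mem_univ, true_and, le_iff_lt_or_eq]
    grind

lemma eq_prefixCount {v : Fin (N + 1) → ι → ℕ} (h₀ : v 0 = 0)
    (hstep : ∀ t, v t.succ = v t.castSucc + Pi.single (w t) 1) : v = prefixCount w := by
  funext k
  induction k using Fin.induction with
  | zero => rw [h₀, prefixCount_zero]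
  | succ t ih => rw [hstep, prefixCount_succ, ih]

lemma prefixCount_last (i : ι) : prefixCount w (Fin.last N) i = #{t | w t = i} := by
  simp [prefixCount, Fin.castSucc_lt_last]

lemma prefixCount_mono : Monotone (prefixCount w) := fun _ _ hjk _ =>
  card_le_card fun t ht => by
    simp only [mem_filter, mem_univ, true_and] at ht ⊢
    exact ⟨ht.1.trans_le hjk, ht.2⟩

lemma prefixCount_le_card (k : Fin (N + 1)) (i : ι) : prefixCount w k i ≤ #{t | w t = i} :=
  (prefixCount_mono w (Fin.le_last k) i).trans_eq (prefixCount_last w i)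

lemma sum_prefixCount [Fintype ι] (k : Fin (N + 1)) : ∑ i, prefixCount w k i = k := by
  induction k using Fin.induction with
  | zero => simp [prefixCount_zero]
  | succ t ih => simp [prefixCount_succ, sum_add_distrib, ih]

lemma prefixCount_ne_zero_iff {k : Fin (N + 1)} {i : ι} :
    prefixCount w k i ≠ 0 ↔ ∃ t, t.castSucc < k ∧ w t = i := by
  simp [prefixCount]

end PrefixCount

lemma isRestrictedGrowth_iff_isLowerSet_prefixCount {ι : Type*} [PartialOrder ι] [DecidableEq ι]
    {N : ℕ} (w : Fin N → ι) :
    IsRestrictedGrowth w ↔ ∀ k, IsLowerSet {i | prefixCount w k i ≠ 0} := by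
  simp only [IsLowerSet, Set.mem_ofPred_eq, prefixCount_ne_zero_iff]
  constructor
  · rintro hw k a b hba ⟨t, htk, rfl⟩
    rcases hba.lt_or_eq with hlt | rfl
    · obtain ⟨s, hst, rfl⟩ := hw t b hlt
      exact ⟨s, (Fin.castSucc_lt_castSucc_iff.2 hst).trans htk, rfl⟩
    · exact ⟨t, htk, rfl⟩
  · intro h t j hj
    obtain ⟨s, hs, rfl⟩ := h t.succ hj.le ⟨t, t.castSucc_lt_succ, rfl⟩
    exact ⟨s, (Fin.castSucc_lt_succ_iff.1 hs).lt_of_ne (by rintro rfl; exact hj.ne rfl), rfl⟩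

instance {α β : Type*} [DecidableEq β] (f : α → β) : DecidableRel (Setoid.ker f) :=
  fun a b => decEq (f a) (f b)

namespace Finpartition

section

variable {X : Type*} [Fintype X] [DecidableEq X]

lemma ext_part {P Q : Finpartition (univ : Finset X)} (h : ∀ t, P.part t = Q.part t) :
    P = Q := by
  ext p
  constructor
  · intro hp
    obtain ⟨t, -, rfl⟩ := P.part_surjOn hp
    rw [h]; exact Q.part_mem.2 (mem_univ t)
  · intro hp
    obtain ⟨t, -, rfl⟩ := Q.part_surjOn hp
    rw [← h]; exact P.part_mem.2 (mem_univ t)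

lemma card_parts_of_forall_card_eq {m n : ℕ} (hm : 0 < m) (hX : Fintype.card X = m * n)
    {P : Finpartition (univ : Finset X)} (hP : ∀ p ∈ P.parts, #p = m) : #P.parts = n := by
  have := P.sum_card_parts
  rw [sum_const_nat hP, card_univ, hX, mul_comm] at this
  exact Nat.eq_of_mul_eq_mul_left hm this

lemma mem_part_ofSetoid_ker {ι : Type*} [DecidableEq ι] (w : X → ι) {s t : X} :
    s ∈ (ofSetoid (Setoid.ker w)).part t ↔ w s = w t := by
  rw [mem_part_ofSetoid_iff_rel, Setoid.ker_def, eq_comm]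

lemma part_ofSetoid_ker {ι : Type*} [DecidableEq ι] (w : X → ι) (t : X) :
    (ofSetoid (Setoid.ker w)).part t = ({s | w s = w t} : Finset X) := by
  ext s
  rw [mem_part_ofSetoid_ker, mem_filter]
  simp

end

variable {X : Type*} [Fintype X] [LinearOrder X] (P : Finpartition (univ : Finset X))

def partMin (t : X) : X := (P.part t).min' (P.part_nonempty.2 (mem_univ t))

lemma partMin_le (t : X) : P.partMin t ≤ t := min'_le _ _ (P.mem_part (mem_univ t))

lemma part_partMin (t : X) : P.part (P.partMin t) = P.part t :=
  P.part_eq_of_mem (P.part_mem.2 (mem_univ t)) (min'_mem _ _)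

lemma partMin_eq_partMin_iff {s t : X} : P.partMin s = P.partMin t ↔ P.part s = P.part t :=
  ⟨fun h => by rw [← part_partMin, h, part_partMin], fun h => by simp only [partMin, h]⟩

lemma partMin_partMin (t : X) : P.partMin (P.partMin t) = P.partMin t :=
  P.partMin_eq_partMin_iff.2 (P.part_partMin t)

def partMins : Finset X := univ.image P.partMin

lemma partMin_mem_partMins (t : X) : P.partMin t ∈ P.partMins :=
  mem_image_of_mem _ (mem_univ t)

lemma card_partMins : #P.partMins = #P.parts := by
  refine card_bij (fun a _ => P.part a) (fun a _ => P.part_mem.2 (mem_univ a)) ?_ ?_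
  · simp only [partMins, mem_image, mem_univ, true_and]
    rintro _ ⟨a, rfl⟩ _ ⟨b, rfl⟩ h
    simpa only [part_partMin, partMin_eq_partMin_iff] using h
  · intro p hp
    obtain ⟨t, -, rfl⟩ := P.part_surjOn hp
    exact ⟨P.partMin t, P.partMin_mem_partMins t, P.part_partMin t⟩

lemma partMin_of_mem_partMins {a : X} (ha : a ∈ P.partMins) : P.partMin a = a := by
  obtain ⟨t, -, rfl⟩ := mem_image.1 ha
  exact P.partMin_partMin t

variable {n : ℕ} (hP : #P.parts = n)

noncomputable def rgWord (t : X) : Fin n :=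
  (P.partMins.orderIsoOfFin (P.card_partMins.trans hP)).symm
    ⟨P.partMin t, P.partMin_mem_partMins t⟩

lemma rgWord_eq_rgWord_iff {s t : X} : P.rgWord hP s = P.rgWord hP t ↔ P.part s = P.part t := by
  rw [rgWord, rgWord, EmbeddingLike.apply_eq_iff_eq, Subtype.mk.injEq, partMin_eq_partMin_iff]

lemma rgWord_orderEmbOfFin (j : Fin n) :
    P.rgWord hP (P.partMins.orderEmbOfFin (P.card_partMins.trans hP) j) = j := by
  rw [rgWord, OrderIso.symm_apply_eq]
  ext
  simp [P.partMin_of_mem_partMins (orderEmbOfFin_mem _ _ j)]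

lemma isRestrictedGrowth_rgWord : IsRestrictedGrowth (P.rgWord hP) := by
  intro t j hj
  refine ⟨_, lt_of_lt_of_le ?_ (P.partMin_le t), P.rgWord_orderEmbOfFin hP j⟩
  have := (P.partMins.orderIsoOfFin (P.card_partMins.trans hP)).strictMono hj
  rwa [rgWord, OrderIso.apply_symm_apply, ← Subtype.coe_lt_coe, coe_orderIsoOfFin_apply] at this

lemma filter_rgWord_eq (s : X) :
    ({t | P.rgWord hP t = P.rgWord hP s} : Finset X) = P.part s := by
  ext t
  rw [mem_filter, rgWord_eq_rgWord_iff, P.mem_part_iff_part_eq_part (mem_univ t) (mem_univ s)]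
  simp

end Finpartition

open Finpartition in
noncomputable def restrictedGrowthEquivFinpartition {X : Type*} [Fintype X] [LinearOrder X]
    {m n : ℕ} (hm : 0 < m) (hX : Fintype.card X = m * n) :
    {w : X → Fin n // (∀ i, #{t | w t = i} = m) ∧ IsRestrictedGrowth w} ≃
      {P : Finpartition (univ : Finset X) // ∀ p ∈ P.parts, #p = m} where
  toFun w := ⟨ofSetoid (Setoid.ker w.1), fun p hp => by
    obtain ⟨t, -, rfl⟩ := (ofSetoid (Setoid.ker w.1)).part_surjOn hp
    rw [part_ofSetoid_ker]
    exact w.2.1 (w.1 t)⟩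
  invFun P := ⟨P.1.rgWord (card_parts_of_forall_card_eq hm hX P.2), fun i => by
      have hP := card_parts_of_forall_card_eq hm hX P.2
      rw [← P.1.rgWord_orderEmbOfFin hP i, filter_rgWord_eq]
      exact P.2 _ (P.1.part_mem.2 (mem_univ _)),
    P.1.isRestrictedGrowth_rgWord _⟩
  left_inv w := by
    apply Subtype.ext
    dsimp only
    refine (isRestrictedGrowth_rgWord _ _).eq_of_forall_eq_iff w.2.2 fun s t => ?_
    rw [rgWord_eq_rgWord_iff, ← mem_part_iff_part_eq_part _ (mem_univ s) (mem_univ t),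
      mem_part_ofSetoid_ker]
  right_inv P := Subtype.ext <| ext_part fun t => by
    ext s
    rw [mem_part_ofSetoid_ker, rgWord_eq_rgWord_iff,
      P.1.mem_part_iff_part_eq_part (mem_univ s) (mem_univ t)]


def IsStacked {m n : ℕ} (x : Fin n → Fin (m + 1)) : Prop :=
  ∀ (i : ℕ) (h : i + 1 < n), x ⟨i + 1, h⟩ = 0 → x ⟨i, Nat.lt_of_succ_lt h⟩ = 0

lemma isStacked_iff {m n : ℕ} {x : Fin n → Fin (m + 1)} :
    IsStacked x ↔ IsLowerSet {j : Fin n | x j.rev ≠ 0} := by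
  constructor
  · intro hx a b hba ha
    have hup : ∀ d i (h : i + d < n), x ⟨i, by omega⟩ ≠ 0 → x ⟨i + d, h⟩ ≠ 0 := by
      intro d
      induction d with
      | zero => exact fun i h hi => hi
      | succ d ih => exact fun i h hi h0 => ih i (by omega) hi (hx (i + d) h h0)
    have hrev : a.rev.val + (a.val - b.val) = b.rev.val := by
      rw [Fin.le_def] at hba; simp only [Fin.val_rev]; omega
    have := hup (a - b) a.rev (by omega) ha
    simpa only [Set.mem_ofPred_eq, hrev] using this
  · intro hx i h h0
    by_contra hne
    refine hx (a := Fin.rev ⟨i, by omega⟩) (b := Fin.rev ⟨i + 1, h⟩) ?_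
      (by simpa using hne) (by simpa using h0)
    rw [Fin.le_def]; simp only [Fin.val_rev]; omega

abbrev Stacked (m n : ℕ) := {x : Fin n → Fin (m + 1) // IsStacked x}

namespace Stacked

variable {m n N : ℕ}

-- Coordinates numbered from the last one down, so that the stacking condition says that the
-- support is an initial segment of `Fin n`.
def revCoords (x : Stacked m n) (j : Fin n) : ℕ := x.1 j.rev

lemma isLowerSet_revCoords (x : Stacked m n) : IsLowerSet {j | x.revCoords j ≠ 0} := by
  have := isStacked_iff.1 x.2
  simp only [ne_eq, Fin.ext_iff, Fin.val_zero] at this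
  exact this

lemma revCoords_le (x : Stacked m n) (j : Fin n) : x.revCoords j ≤ m :=
  Nat.lt_succ_iff.1 (x.1 j.rev).2

lemma revCoords_le_revCoords {x y : Stacked m n} : x.revCoords ≤ y.revCoords ↔ x ≤ y :=
  ⟨fun h i => by simpa [revCoords] using h i.rev, fun h j => h j.rev⟩

lemma revCoords_lt_revCoords {x y : Stacked m n} : x.revCoords < y.revCoords ↔ x < y := by
  simp only [lt_iff_le_not_ge, revCoords_le_revCoords]

lemma revCoords_injective : Function.Injective (revCoords : Stacked m n → Fin n → ℕ) :=
  fun _ _ h => le_antisymm (revCoords_le_revCoords.1 h.le) (revCoords_le_revCoords.1 h.ge)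

def ofRevCoords (v : Fin n → ℕ) (hv : ∀ j, v j ≤ m) (hlow : IsLowerSet {j | v j ≠ 0}) :
    Stacked m n :=
  ⟨fun i => ⟨v i.rev, Nat.lt_succ_of_le (hv i.rev)⟩, isStacked_iff.2 fun a b hba ha => by
    simp only [Set.mem_ofPred_eq, Fin.rev_rev, ne_eq, Fin.ext_iff, Fin.val_zero] at ha ⊢
    exact hlow hba ha⟩

@[simp]
lemma revCoords_ofRevCoords (v : Fin n → ℕ) (hv : ∀ j, v j ≤ m)
    (hlow : IsLowerSet {j | v j ≠ 0}) : (ofRevCoords v hv hlow).revCoords = v := by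
  ext j
  simp [revCoords, ofRevCoords]

instance : BoundedOrder (Stacked m n) where
  top := ⟨fun _ => Fin.last m, fun _ _ h => h⟩
  le_top _ _ := Fin.le_last _
  bot := ⟨fun _ => 0, fun _ _ _ => rfl⟩
  bot_le _ _ := Fin.zero_le _

lemma revCoords_top : (⊤ : Stacked m n).revCoords = fun _ => m := rfl

lemma revCoords_bot : (⊥ : Stacked m n).revCoords = 0 := rfl

-- Raise the first coordinate `j` where `x` is below `y`: the coordinates before `j` agree with
-- those of `y`, hence are nonzero, so the support stays an initial segment.
lemma exists_revCoords_eq_add_single {x y : Stacked m n} (hxy : x < y) :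
    ∃ z : Stacked m n, z ≤ y ∧ ∃ j, z.revCoords = x.revCoords + Pi.single j 1 := by
  classical
  set u := x.revCoords
  set v := y.revCoords
  have huv : u < v := revCoords_lt_revCoords.2 hxy
  have hT : (univ.filter fun k => u k < v k).Nonempty := by
    obtain ⟨k, hk⟩ := (Pi.lt_def.1 huv).2
    exact ⟨k, by simpa using hk⟩
  set j := (univ.filter fun k => u k < v k).min' hT
  have hj : u j < v j := by simpa using min'_mem _ hT
  have hbefore : ∀ k < j, u k ≠ 0 := by
    intro k hk
    have hkv : u k = v k := le_antisymm (huv.le k) (not_lt.1 fun h =>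
      (min'_le _ k (by simpa using h)).not_gt hk)
    rw [hkv]
    exact y.isLowerSet_revCoords hk.le (show v j ≠ 0 by omega)
  have hbound : ∀ k, (u + Pi.single j 1 : Fin n → ℕ) k ≤ m := by
    intro k
    rcases eq_or_ne k j with rfl | hk
    · have : v j ≤ m := y.revCoords_le j
      simp only [Pi.add_apply, Pi.single_eq_same]
      omega
    · simpa [hk] using x.revCoords_le k
  have hsupp : IsLowerSet {k | (u + Pi.single j 1 : Fin n → ℕ) k ≠ 0} := by
    intro a b hba ha
    simp only [Set.mem_ofPred_eq, Pi.add_apply, Pi.single_apply] at ha ⊢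
    rcases lt_trichotomy b j with h | rfl | h
    · have := hbefore b h; omega
    · simp
    · have haj : a ≠ j := (h.trans_le hba).ne'
      have : u b ≠ 0 := x.isLowerSet_revCoords hba (show u a ≠ 0 by simpa [haj] using ha)
      omega
  refine ⟨ofRevCoords _ hbound hsupp, ?_, j, revCoords_ofRevCoords _ _ _⟩
  rw [← revCoords_le_revCoords, revCoords_ofRevCoords]
  intro k
  rcases eq_or_ne k j with rfl | hk
  · simpa using hj
  · simpa [hk] using huv.le k

instance : GradeMinOrder ℕ (Stacked m n) where
  grade x := ∑ j, x.revCoords j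
  grade_strictMono _ _ h := Fintype.sum_strictMono (revCoords_lt_revCoords.2 h)
  covBy_grade x y h := by
    obtain ⟨z, hzy, j, hz⟩ := exists_revCoords_eq_add_single h.lt
    have hxz : x < z := revCoords_lt_revCoords.1 (by
      rw [hz]; exact lt_add_of_pos_right _ (Pi.lt_def.2 ⟨fun _ => Nat.zero_le _, j, by simp⟩))
    obtain rfl : z = y := hzy.eq_of_not_lt fun hlt => h.2 hxz hlt
    rw [Nat.covBy_iff_add_one_eq, hz]
    simp [sum_add_distrib]
  isMin_grade x hx := by
    rw [hx.eq_bot, revCoords_bot]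
    simp

lemma grade_eq_sum (x : Stacked m n) : grade ℕ x = ∑ j, x.revCoords j := rfl

lemma grade_top : grade ℕ (⊤ : Stacked m n) = m * n := by
  simp [grade_eq_sum, revCoords_top, mul_comm]

lemma exists_revCoords_succ (f : GradeSection (Stacked m n) N) (t : Fin N) :
    ∃ i, (f.toFun t.succ).revCoords = (f.toFun t.castSucc).revCoords + Pi.single i 1 := by
  refine exists_eq_add_single_of_le_of_sum_eq
    (revCoords_le_revCoords.2 (f.monotone t.castSucc_le_succ)) ?_
  rw [← grade_eq_sum, ← grade_eq_sum, f.grade_toFun, f.grade_toFun, Fin.val_succ,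
    Fin.val_castSucc]

noncomputable def stepWord (f : GradeSection (Stacked m n) N) (t : Fin N) : Fin n :=
  (exists_revCoords_succ f t).choose

lemma revCoords_eq_prefixCount (f : GradeSection (Stacked m n) N) (k : Fin (N + 1)) :
    (f.toFun k).revCoords = prefixCount (stepWord f) k :=
  congrFun (eq_prefixCount (stepWord f) (v := fun k => (f.toFun k).revCoords)
    (by rw [f.toFun_zero, revCoords_bot]) fun t => (exists_revCoords_succ f t).choose_spec) k

def ofWord (w : Fin N → Fin n) (hw : ∀ i, #{t | w t = i} ≤ m) (hrg : IsRestrictedGrowth w) :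
    GradeSection (Stacked m n) N where
  toFun k := ofRevCoords (prefixCount w k) (fun i => (prefixCount_le_card w k i).trans (hw i))
    ((isRestrictedGrowth_iff_isLowerSet_prefixCount w).1 hrg k)
  monotone _ _ hjk := revCoords_le_revCoords.1 (by simpa using prefixCount_mono w hjk)
  grade_toFun k := by rw [grade_eq_sum, revCoords_ofRevCoords, sum_prefixCount]

lemma stepWord_ofWord (w : Fin N → Fin n) (hw : ∀ i, #{t | w t = i} ≤ m)
    (hrg : IsRestrictedGrowth w) : stepWord (ofWord w hw hrg) = w := by
  funext t
  have h : _ = _ + Pi.single (stepWord (ofWord w hw hrg) t) 1 :=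
    (exists_revCoords_succ (ofWord w hw hrg) t).choose_spec
  generalize stepWord (ofWord w hw hrg) t = c at h
  simp only [ofWord, revCoords_ofRevCoords, prefixCount_succ, add_right_inj] at h
  simpa [Pi.single_apply, eq_comm] using congrFun h (w t)

noncomputable def gradeSectionEquivRestrictedGrowth :
    GradeSection (Stacked m n) (m * n) ≃
      {w : Fin (m * n) → Fin n // (∀ i, #{t | w t = i} = m) ∧ IsRestrictedGrowth w} where
  toFun f := ⟨stepWord f, fun i => by
      rw [← prefixCount_last, ← revCoords_eq_prefixCount, f.toFun_last grade_top,
        revCoords_top],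
    (isRestrictedGrowth_iff_isLowerSet_prefixCount _).2 fun k => by
      simpa only [← revCoords_eq_prefixCount] using isLowerSet_revCoords _⟩
  invFun w := ofWord w.1 (fun i => (w.2.1 i).le) w.2.2
  left_inv f := GradeSection.ext <| funext fun k => revCoords_injective <| by
    simp [ofWord, revCoords_eq_prefixCount]
  right_inv w := Subtype.ext (stepWord_ofWord _ _ _)

end Stacked

/-- There is a bijection between maximal chains of the stacked lattice `Σ_n C_{m-1}^n`
(for `m ≥ 1`), represented as the subposet of `Fin n → Fin (m+1)` of tuples with
`x (i+1) = 0 → x i = 0`, and partitions of a set with `m·n` elements into blocks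
of size exactly `m`. -/
theorem stmt_2 (m n : ℕ) (hm : 1 ≤ m) :
    Nonempty (
      {C : Set {x : Fin n → Fin (m + 1) //
          ∀ (i : ℕ) (h : i + 1 < n), x ⟨i + 1, h⟩ = 0 → x ⟨i, Nat.lt_of_succ_lt h⟩ = 0} //
        IsMaxChain (· ≤ ·) C}
      ≃ {P : Finpartition (Finset.univ : Finset (Fin (m * n))) //
          ∀ p ∈ P.parts, p.card = m}) :=
  ⟨isMaxChainEquivFlag
    |>.trans (Flag.equivGradeSection Stacked.grade_top)
    |>.trans Stacked.gradeSectionEquivRestrictedGrowth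
    |>.trans (restrictedGrowthEquivFinpartition hm (Fintype.card_fin _))⟩
end

section
/- Let M : ℕ → Type be a family of partial orders and f : ∀ i, M i → M (i+1) a family of monotone maps, let L n be the concrete lax sum of M 0 → ... → M n, let ι_n : M n → L n be x ↦ (n, x), let f'_n : L n → L (n+1) be (j, x) ↦ (j, x), and ι_{n+1} : M (n+1) → L (n+1) be x ↦ (n+1, x). Then the square (ι_n, f_n, f'_n, ι_{n+1}) is a lax pushout, i.e.: (i) f'_n is monotone, order-reflecting, and has down-closed image; (ii) ι_{n+1} is monotone and order-reflecting; (iii) the images of f'_n and ι_{n+1} are disjoint and their union is all of L (n+1); and (iv) for every a ∈ L n and b ∈ M (n+1), f'_n(a) ≤ ι_{n+1}(b) holds if and only if there exists c ∈ M n with a ≤ ι_n(c) and f_n(c) ≤ b. -/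
/-
Everything in `L (n+1)` sits at a level `j ≤ n + 1`; the levels `≤ n` form the image of `f'_n`
(on which the order is literally that of `L n`) and level `n + 1` is the image of `ι_{n+1}`.
For (iv), a comparison from level `j ≤ n` to level `n + 1` factors as `F_{j,n+1} = f_n ∘ F_{j,n}`,
so `c := F_{j,n}(x)` is the required witness, and monotonicity of `f_n` gives the converse.
-/

/-- The composite `F_{j,l} = f_{l-1} ∘ ⋯ ∘ f_j : M j → M l` (identity when `j = l`). -/
def laxF {M : ℕ → Type} (f : ∀ i, M i → M (i + 1)) (j : ℕ) (x : M j) :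
    ∀ l, j ≤ l → M l
  | 0, h => (Nat.le_zero.mp h) ▸ x
  | l + 1, h =>
    if he : j = l + 1 then he ▸ x
    else f l (laxF f j x l (Nat.lt_succ_iff.mp (lt_of_le_of_ne h he)))

/-- The concrete lax sum of the sequence `M 0 → M 1 → ⋯ → M n`:
pairs `(j, x)` with `j ∈ Fin (n+1)` and `x ∈ M j`. -/
abbrev LaxSum (M : ℕ → Type) (n : ℕ) : Type := Σ j : Fin (n + 1), M (j : ℕ)

/-- The lax sum order: `(j, x) ≤ (l, y)` iff `j ≤ l` and `F_{j,l}(x) ≤ y`. -/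
def laxLE {M : ℕ → Type} [∀ i, PartialOrder (M i)] (f : ∀ i, M i → M (i + 1)) {n : ℕ}
    (a b : LaxSum M n) : Prop :=
  ∃ h : (a.1 : ℕ) ≤ (b.1 : ℕ), laxF f (a.1 : ℕ) a.2 (b.1 : ℕ) h ≤ b.2

/-- The canonical map `f'_n : L n → L (n+1)`, `(j, x) ↦ (j, x)`. -/
def stepMap {M : ℕ → Type} {n : ℕ} (a : LaxSum M n) : LaxSum M (n + 1) :=
  ⟨⟨(a.1 : ℕ), Nat.lt_succ_of_lt a.1.isLt⟩, a.2⟩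

/-- The canonical map `ι_j : M j → L n`, `x ↦ (j, x)`, for `j ≤ n`. -/
def laxIota {M : ℕ → Type} {n : ℕ} (j : ℕ) (h : j ≤ n) (x : M j) : LaxSum M n :=
  ⟨⟨j, Nat.lt_succ_of_le h⟩, x⟩

section LaxSum

variable {M : ℕ → Type} (f : ∀ i, M i → M (i + 1))

lemma laxF_self (j : ℕ) (x : M j) (h : j ≤ j) : laxF f j x j h = x := by
  cases j <;> simp [laxF]

lemma laxF_succ {j l : ℕ} (x : M j) (h : j ≤ l) :
    laxF f j x (l + 1) (h.trans l.le_succ) = f l (laxF f j x l h) := by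
  simp [laxF, show j ≠ l + 1 by omega]

variable {n : ℕ}

lemma exists_eq_stepMap_of_val_le (b : LaxSum M (n + 1)) (hb : (b.1 : ℕ) ≤ n) :
    ∃ a : LaxSum M n, b = stepMap a :=
  ⟨⟨⟨b.1, Nat.lt_succ_of_le hb⟩, b.2⟩, rfl⟩

lemma stepMap_ne_laxIota (a : LaxSum M n) (c : M (n + 1)) :
    stepMap a ≠ laxIota (n + 1) le_rfl c := by
  intro h
  have := congrArg (fun z : LaxSum M (n + 1) => (z.1 : ℕ)) h
  simp only [stepMap, laxIota] at this
  omega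

lemma eq_stepMap_or_eq_laxIota (b : LaxSum M (n + 1)) :
    (∃ a : LaxSum M n, b = stepMap a) ∨ ∃ c : M (n + 1), b = laxIota (n + 1) le_rfl c := by
  obtain ⟨⟨j, hj⟩, y⟩ := b
  rcases Nat.lt_succ_iff_lt_or_eq.mp hj with hjn | rfl
  · exact Or.inl (exists_eq_stepMap_of_val_le _ (Nat.lt_succ_iff.mp hjn))
  · exact Or.inr ⟨y, rfl⟩

variable [∀ i, PartialOrder (M i)]

lemma laxLE_stepMap_iff (a b : LaxSum M n) :
    laxLE f (stepMap a) (stepMap b) ↔ laxLE f a b :=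
  Iff.rfl

lemma exists_eq_stepMap_of_laxLE {a : LaxSum M n} {b : LaxSum M (n + 1)}
    (h : laxLE f b (stepMap a)) : ∃ a' : LaxSum M n, b = stepMap a' :=
  exists_eq_stepMap_of_val_le b (h.1.trans (Nat.lt_succ_iff.mp a.1.isLt))

lemma laxLE_laxIota_iff {j : ℕ} (hj : j ≤ n) (x y : M j) :
    laxLE f (laxIota j hj x) (laxIota j hj y) ↔ x ≤ y := by
  simp only [laxLE, laxIota, laxF_self, le_refl, exists_const]
  exact Iff.rfl

lemma laxLE_stepMap_laxIota_iff (hfn : Monotone (f n)) (a : LaxSum M n) (b : M (n + 1)) :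
    laxLE f (stepMap a) (laxIota (n + 1) le_rfl b) ↔
      ∃ c : M n, laxLE f a (laxIota n le_rfl c) ∧ f n c ≤ b := by
  obtain ⟨⟨j, hj⟩, x⟩ := a
  have hjn : j ≤ n := Nat.lt_succ_iff.mp hj
  simp only [laxLE, stepMap, laxIota]
  constructor
  · rintro ⟨_, hle⟩
    exact ⟨laxF f j x n hjn, ⟨hjn, le_rfl⟩, by rwa [laxF_succ f x hjn] at hle⟩
  · rintro ⟨c, ⟨_, hxc⟩, hcb⟩
    exact ⟨hjn.trans n.le_succ, by rw [laxF_succ f x hjn]; exact (hfn hxc).trans hcb⟩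

end LaxSum

/-- The square `(ι_n, f_n, f'_n, ι_{n+1})` built from the concrete lax sums is a lax
pushout: (i) `f'_n` is monotone, order-reflecting and has down-closed image;
(ii) `ι_{n+1}` is monotone and order-reflecting; (iii) the images of `f'_n` and
`ι_{n+1}` are disjoint and cover `L (n+1)`; (iv) `f'_n a ≤ ι_{n+1} b` iff there is
`c ∈ M n` with `a ≤ ι_n c` and `f n c ≤ b`. -/
theorem stmt_18 (M : ℕ → Type) [∀ i, PartialOrder (M i)] (f : ∀ i, M i → M (i + 1))
    (hf : ∀ i, Monotone (f i)) (n : ℕ) :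
    -- (i) f'_n monotone and order-reflecting …
    (∀ a b : LaxSum M n, laxLE f a b ↔ laxLE f (stepMap a) (stepMap b)) ∧
    -- … with down-closed image
    (∀ (a : LaxSum M n) (b : LaxSum M (n + 1)), laxLE f b (stepMap a) →
        ∃ a' : LaxSum M n, b = stepMap a') ∧
    -- (ii) ι_{n+1} monotone and order-reflecting
    (∀ x y : M (n + 1),
        x ≤ y ↔ laxLE f (laxIota (n + 1) le_rfl x) (laxIota (n + 1) le_rfl y)) ∧
    -- (iii) images disjoint and covering
    (∀ (a : LaxSum M n) (c : M (n + 1)), stepMap a ≠ laxIota (n + 1) le_rfl c) ∧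
    (∀ b : LaxSum M (n + 1), (∃ a : LaxSum M n, b = stepMap a) ∨
        (∃ c : M (n + 1), b = laxIota (n + 1) le_rfl c)) ∧
    -- (iv) the lax pushout comparison condition
    (∀ (a : LaxSum M n) (b : M (n + 1)),
        laxLE f (stepMap a) (laxIota (n + 1) le_rfl b) ↔
          ∃ c : M n, laxLE f a (laxIota n le_rfl c) ∧ f n c ≤ b) :=
  ⟨fun a b => (laxLE_stepMap_iff f a b).symm,
    fun _ _ => exists_eq_stepMap_of_laxLE f,
    fun x y => (laxLE_laxIota_iff f le_rfl x y).symm,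
    stepMap_ne_laxIota,
    eq_stepMap_or_eq_laxIota,
    laxLE_stepMap_laxIota_iff f (hf n)⟩
end
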